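/- Let α ≥ 1/2, λ > 0, r > 0. If X ~ Gamma(α, λ₁), then X_r = G + (√(rX) + N/√(2λ))² is gamma distributed with shape α and rate λ_r = (r/λ₁ + 1/λ)^{-1}. -/

import Mathlib

/-!
Both sides are supported on `[0, ∞)`, so it suffices to compare their Laplace transforms at the
nonpositive integers `t = -n`: pushed forward to `ℝ≥0`, these are the moments of the injective
bounded continuous function `x ↦ exp (-x)`, and by Stone–Weierstrass such moments determine a finite
measure. Given `X = x`, the variable `√(r x) + N / √(2λ)` is Gaussian with mean `√(r x)` and
variance `1 / (2λ)`, and completing the square gives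
`E[exp (t (√(r x) + N / √(2λ))²)] = (1 - t/λ)^(-1/2) exp (r t x / (1 - t/λ))`.
Integrating against `Gamma(α, λ₁)` and multiplying by the transform `(1 - t/λ)^(-(α - 1/2))` of `G`
gives `(1 - t/λ)^(-α) (1 - r t / (λ₁ (1 - t/λ)))^(-α) = (1 - t/λ_r)^(-α)`.
-/

open MeasureTheory ProbabilityTheory Real
open scoped NNReal BoundedContinuousFunction

namespace MeasureTheory.Measure

theorem ext_of_forall_integral_pow_eq {E : Type*} [TopologicalSpace E] [PolishSpace E]
    [MeasurableSpace E] [BorelSpace E] {μ ν : Measure E} [IsFiniteMeasure μ] [IsFiniteMeasure ν]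
    (f : E →ᵇ ℝ) (hf : Function.Injective f)
    (h : ∀ n : ℕ, ∫ x, f x ^ n ∂μ = ∫ x, f x ^ n ∂ν) : μ = ν := by
  let A : StarSubalgebra ℝ (E →ᵇ ℝ) :=
    { (Polynomial.aeval f).range with
      star_mem' := fun {g} hg => by convert hg; ext x; exact star_trivial _ }
  refine ext_of_forall_mem_subalgebra_integral_eq_of_polish (A := A) ?_ ?_
  · intro x y hxy
    exact ⟨_, ⟨_, ⟨f, ⟨Polynomial.X, Polynomial.aeval_X f⟩, rfl⟩, rfl⟩, hf.ne hxy⟩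
  · rintro g ⟨p, rfl⟩
    induction p using Polynomial.induction_on' with
    | add p q hp hq =>
      simp only [map_add, BoundedContinuousFunction.coe_add, Pi.add_apply]
      rw [integral_add (BoundedContinuousFunction.integrable _ _)
        (BoundedContinuousFunction.integrable _ _), integral_add
        (BoundedContinuousFunction.integrable _ _) (BoundedContinuousFunction.integrable _ _), hp, hq]
    | monomial n a =>
      simp [Polynomial.aeval_monomial, integral_const_mul, h n]

lemma map_toNNReal_map_coe {μ : Measure ℝ} (hμ : ∀ᵐ x ∂μ, 0 ≤ x) :
    (μ.map Real.toNNReal).map ((↑) : ℝ≥0 → ℝ) = μ := by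
  rw [map_map (by fun_prop) (by fun_prop)]
  conv_rhs => rw [← map_id (μ := μ)]
  refine map_congr ?_
  filter_upwards [hμ] with x hx using Real.coe_toNNReal x hx

theorem ext_of_mgf_neg_nat_eq {μ ν : Measure ℝ} [IsFiniteMeasure μ] [IsFiniteMeasure ν]
    (hμ : ∀ᵐ x ∂μ, 0 ≤ x) (hν : ∀ᵐ x ∂ν, 0 ≤ x)
    (h : ∀ n : ℕ, mgf id μ (-n) = mgf id ν (-n)) : μ = ν := by
  rw [← μ.map_toNNReal_map_coe hμ, ← ν.map_toNNReal_map_coe hν]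
  congr 1
  let f : ℝ≥0 →ᵇ ℝ := .ofNormedAddCommGroup (fun x => exp (-(x : ℝ))) (by fun_prop) 1 fun x => by
    simp [abs_exp]
  have hf : Function.Injective f := fun x y hxy => by simpa [f] using hxy
  refine ext_of_forall_integral_pow_eq f hf fun n => ?_
  have hpow : ∀ ρ : Measure ℝ, (∀ᵐ x ∂ρ, 0 ≤ x) →
      ∫ x, f x ^ n ∂(ρ.map Real.toNNReal) = mgf id ρ (-n) := by
    intro ρ hρ
    rw [integral_map (by fun_prop) (by fun_prop), mgf]
    refine integral_congr_ae ?_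
    filter_upwards [hρ] with x hx
    simp [f, ← exp_nat_mul, hx]
  rw [hpow μ hμ, hpow ν hν, h n]

end MeasureTheory.Measure

namespace ProbabilityTheory

lemma gammaMeasure_zero_left (ρ : ℝ) : gammaMeasure 0 ρ = 0 := by
  have : gammaPDF 0 ρ = 0 := by
    ext x
    simp [gammaPDF_eq, Real.Gamma_zero]
  simp [gammaMeasure, this]

lemma measurable_gammaPDF (a ρ : ℝ) : Measurable (gammaPDF a ρ) :=
  (measurable_gammaPDFReal a ρ).ennreal_ofReal

lemma ae_nonneg_gammaMeasure (a ρ : ℝ) : ∀ᵐ x ∂gammaMeasure a ρ, 0 ≤ x := by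
  rw [gammaMeasure, ae_withDensity_iff (measurable_gammaPDF a ρ)]
  refine ae_of_all _ fun x hx => ?_
  by_contra h
  exact hx (gammaPDF_of_neg (not_le.mp h))

lemma ae_nonneg_of_map_eq_gammaMeasure {Ω : Type*} [MeasurableSpace Ω] {P : Measure Ω}
    {Y : Ω → ℝ} {a ρ : ℝ} (hY : Measurable Y) (hlaw : P.map Y = gammaMeasure a ρ) :
    ∀ᵐ ω ∂P, 0 ≤ Y ω :=
  (ae_map_iff hY.aemeasurable measurableSet_Ici).1 (hlaw ▸ ae_nonneg_gammaMeasure a ρ)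

lemma integral_gammaPDFReal_eq_one {a ρ : ℝ} (ha : 0 < a) (hρ : 0 < ρ) :
    ∫ x, gammaPDFReal a ρ x = 1 := by
  rw [integral_eq_lintegral_of_nonneg_ae (ae_of_all _ (gammaPDFReal_nonneg ha hρ))
    (measurable_gammaPDFReal a ρ).aestronglyMeasurable]
  simp [← gammaPDF.eq_def, lintegral_gammaPDF_eq_one ha hρ]

lemma gammaPDFReal_mul_exp {a ρ t : ℝ} (hρ : 0 < ρ) (ht : t < ρ) (x : ℝ) :
    gammaPDFReal a ρ x * exp (t * x) = (1 - t / ρ) ^ (-a) * gammaPDFReal a (ρ - t) x := by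
  unfold gammaPDFReal
  split_ifs with hx
  · have hρt : 0 < ρ - t := sub_pos.2 ht
    have hscale : (1 - t / ρ) ^ (-a) * (ρ - t) ^ a = ρ ^ a := by
      rw [show 1 - t / ρ = (ρ - t) / ρ by field_simp, div_rpow hρt.le hρ.le, rpow_neg hρt.le,
        rpow_neg hρ.le]
      field_simp
    have hexp : exp (-(ρ * x)) * exp (t * x) = exp (-((ρ - t) * x)) := by
      rw [← exp_add]
      ring_nf
    rw [← hscale, ← hexp]
    ring
  · simp

lemma mgf_id_gammaMeasure {a ρ t : ℝ} (ha : 0 < a) (hρ : 0 < ρ) (ht : t < ρ) :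
    mgf id (gammaMeasure a ρ) t = (1 - t / ρ) ^ (-a) := by
  rw [mgf, gammaMeasure, integral_withDensity_eq_integral_toReal_smul (measurable_gammaPDF a ρ)
    (ae_of_all _ fun _ => ENNReal.ofReal_lt_top)]
  simp only [gammaPDF, ENNReal.toReal_ofReal (gammaPDFReal_nonneg ha hρ _), smul_eq_mul, id,
    gammaPDFReal_mul_exp hρ ht, integral_const_mul, integral_gammaPDFReal_eq_one ha (sub_pos.2 ht),
    mul_one]

lemma gaussianPDFReal_mul_exp_mul_sq {μ t : ℝ} {v : ℝ≥0} (hv : v ≠ 0) (htv : 2 * t * v < 1)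
    (x : ℝ) :
    gaussianPDFReal μ v x * exp (t * x ^ 2) =
      (√(2 * π * v))⁻¹ * exp (t * μ ^ 2 / (1 - 2 * t * v)) *
        exp (-((1 - 2 * t * v) / (2 * v)) * (x - μ / (1 - 2 * t * v)) ^ 2) := by
  have hd : 1 - 2 * t * v ≠ 0 := by linarith
  have hexp : -(x - μ) ^ 2 / (2 * v) + t * x ^ 2 = t * μ ^ 2 / (1 - 2 * t * v) +
      -((1 - 2 * t * v) / (2 * v)) * (x - μ / (1 - 2 * t * v)) ^ 2 := by
    generalize hdef : 1 - 2 * t * v = d at hd ⊢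
    field_simp
    rw [← hdef]
    ring
  rw [gaussianPDFReal, mul_assoc, ← exp_add, hexp, exp_add, ← mul_assoc]

lemma mgf_sq_gaussianReal {μ t : ℝ} {v : ℝ≥0} (htv : 2 * t * v < 1) :
    mgf (· ^ 2) (gaussianReal μ v) t =
      (1 - 2 * t * v) ^ (-(1 / 2) : ℝ) * exp (t * μ ^ 2 / (1 - 2 * t * v)) := by
  rcases eq_or_ne v 0 with rfl | hv
  · simp [mgf, gaussianReal_zero_var]
  have hd : 0 < 1 - 2 * t * v := by linarith
  have hconst : (√(2 * π * v))⁻¹ * √(π / ((1 - 2 * t * v) / (2 * v))) =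
      (1 - 2 * t * v) ^ (-(1 / 2) : ℝ) := by
    rw [← sqrt_inv, ← sqrt_mul (by positivity), rpow_neg hd.le, ← sqrt_eq_rpow, ← sqrt_inv]
    congr 1
    field_simp
  rw [mgf, integral_gaussianReal_eq_integral_smul hv]
  simp only [smul_eq_mul, gaussianPDFReal_mul_exp_mul_sq hv htv, integral_const_mul]
  rw [integral_sub_right_eq_self (fun x => exp (-((1 - 2 * t * v) / (2 * v)) * x ^ 2)),
    integral_gaussian, ← hconst]
  ring

lemma mgf_sq_const_add_div_gaussianReal {m c t : ℝ} (hc : c ≠ 0) (ht : 2 * t < c ^ 2) :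
    mgf (fun y => (m + y / c) ^ 2) (gaussianReal 0 1) t =
      (1 - 2 * t / c ^ 2) ^ (-(1 / 2) : ℝ) * exp (t * m ^ 2 / (1 - 2 * t / c ^ 2)) := by
  have hc2 : 0 < c ^ 2 := by positivity
  rw [show (fun y => (m + y / c) ^ 2) = ((· ^ 2) ∘ (m + ·)) ∘ (· / c) from rfl,
    ← mgf_map (by fun_prop) (by fun_prop), ← mgf_map (by fun_prop) (by fun_prop),
    gaussianReal_map_div_const, gaussianReal_map_const_add, zero_div, zero_add,
    mgf_sq_gaussianReal] <;>
  simp only [NNReal.coe_div, NNReal.coe_one, NNReal.coe_mk, mul_one_div]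
  rwa [div_lt_one hc2]

lemma integrable_exp_mul_of_nonpos_of_nonneg {α : Type*} [MeasurableSpace α] {μ : Measure α}
    [IsFiniteMeasure μ] {f : α → ℝ} (hf : Measurable f) (hf0 : ∀ x, 0 ≤ f x) {t : ℝ}
    (ht : t ≤ 0) : Integrable (fun x => exp (t * f x)) μ :=
  .of_bound (by fun_prop) 1 (ae_of_all _ fun x => by
    rw [norm_of_nonneg (exp_nonneg _), exp_le_one_iff]
    exact mul_nonpos_of_nonpos_of_nonneg ht (hf0 x))

section Channel

variable {Ω : Type*} [MeasurableSpace Ω] {P : Measure Ω} [IsProbabilityMeasure P]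

theorem mgf_sq_sqrt_mul_add_div_sqrt {X N : Ω → ℝ} {lam r t : ℝ} (hX : Measurable X)
    (hN : Measurable N) (hXN : IndepFun X N P) (hX0 : ∀ᵐ ω ∂P, 0 ≤ X ω)
    (hNlaw : P.map N = gaussianReal 0 1) (hlam : 0 < lam) (hr : 0 ≤ r) (ht : t ≤ 0) :
    mgf (fun ω => (√(r * X ω) + N ω / √(2 * lam)) ^ 2) P t =
      (1 - t / lam) ^ (-(1 / 2) : ℝ) * mgf X P (r * t / (1 - t / lam)) := by
  set F : ℝ × ℝ → ℝ := fun p => exp (t * (√(r * p.1) + p.2 / √(2 * lam)) ^ 2)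
  have hF : Integrable F ((P.map X).prod (gaussianReal 0 1)) :=
    integrable_exp_mul_of_nonpos_of_nonneg (by fun_prop) (fun _ => sq_nonneg _) ht
  have hlaw : P.map (fun ω => (X ω, N ω)) = (P.map X).prod (gaussianReal 0 1) := by
    rw [← hNlaw]
    exact (indepFun_iff_map_prod_eq_prod_map_map hX.aemeasurable hN.aemeasurable).1 hXN
  have hinner : ∀ᵐ x ∂P.map X, ∫ y, F (x, y) ∂gaussianReal 0 1 =
      (1 - t / lam) ^ (-(1 / 2) : ℝ) * exp (r * t / (1 - t / lam) * x) := by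
    filter_upwards [(ae_map_iff hX.aemeasurable measurableSet_Ici).2 hX0] with x hx
    have h2lam : √(2 * lam) ^ 2 = 2 * lam := sq_sqrt (by positivity)
    change mgf (fun y => (√(r * x) + y / √(2 * lam)) ^ 2) _ t = _
    rw [mgf_sq_const_add_div_gaussianReal (by positivity) (by rw [h2lam]; linarith), h2lam,
      sq_sqrt (mul_nonneg hr hx)]
    congr 2 <;> field_simp
  calc mgf (fun ω => (√(r * X ω) + N ω / √(2 * lam)) ^ 2) P t
      = ∫ p, F p ∂(P.map X).prod (gaussianReal 0 1) := by
        rw [← hlaw, integral_map (by fun_prop) (hlaw ▸ hF.aestronglyMeasurable)]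
        rfl
    _ = ∫ x, (1 - t / lam) ^ (-(1 / 2) : ℝ) * exp (r * t / (1 - t / lam) * x) ∂P.map X := by
        rw [integral_prod F hF]
        exact integral_congr_ae hinner
    _ = _ := by
        rw [integral_const_mul, ← mgf_id_map hX.aemeasurable]
        rfl

theorem mgf_gamma_channel {X G N : Ω → ℝ} {α lam lam₁ r t : ℝ} (hα : 1 / 2 < α) (hlam : 0 < lam)
    (hlam₁ : 0 < lam₁) (hr : 0 ≤ r) (ht : t ≤ 0) (hXmeas : Measurable X) (hGmeas : Measurable G)
    (hNmeas : Measurable N) (hXN : IndepFun X N P)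
    (hGQ : IndepFun G (fun ω => (√(r * X ω) + N ω / √(2 * lam)) ^ 2) P)
    (hX : P.map X = gammaMeasure α lam₁) (hG : P.map G = gammaMeasure (α - 1 / 2) lam)
    (hN : P.map N = gaussianReal 0 1) :
    mgf (fun ω => G ω + (√(r * X ω) + N ω / √(2 * lam)) ^ 2) P t =
      (1 - t / (r / lam₁ + 1 / lam)⁻¹) ^ (-α) := by
  have hd : 0 < 1 - t / lam := by
    have := div_nonpos_of_nonpos_of_nonneg ht hlam.le
    linarith
  have hs : r * t / (1 - t / lam) ≤ 0 :=
    div_nonpos_of_nonpos_of_nonneg (mul_nonpos_of_nonneg_of_nonpos hr ht) hd.le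
  have hs' : 0 ≤ 1 - r * t / (1 - t / lam) / lam₁ := by
    have := div_nonpos_of_nonpos_of_nonneg hs hlam₁.le
    linarith
  have hrate : (1 - t / lam) * (1 - r * t / (1 - t / lam) / lam₁) =
      1 - t / (r / lam₁ + 1 / lam)⁻¹ := by
    have : lam - t ≠ 0 := (by linarith : 0 < lam - t).ne'
    field_simp
    ring
  change mgf (G + _) P t = _
  rw [hGQ.mgf_add' (by fun_prop) (by fun_prop), ← mgf_id_map hGmeas.aemeasurable, hG,
    mgf_sq_sqrt_mul_add_div_sqrt hXmeas hNmeas hXN (ae_nonneg_of_map_eq_gammaMeasure hXmeas hX)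
      hN hlam hr ht, ← mgf_id_map hXmeas.aemeasurable, hX,
    mgf_id_gammaMeasure (by linarith) hlam (by linarith),
    mgf_id_gammaMeasure (by linarith) hlam₁ (by linarith), ← mul_assoc, ← rpow_add hd,
    show -(α - 1 / 2) + -(1 / 2) = -α by ring, ← mul_rpow hd.le hs', hrate]

end Channel

end ProbabilityTheory

/-- **Gamma input gives gamma output in the quadratic gamma channel.** Let `α ≥ 1/2`,
`λ > 0`, `r > 0`. If `X ~ Gamma(α, λ₁)`, then
`X_r = G + (√(rX) + N/√(2λ))²` is gamma distributed with shape `α` and rate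
`λ_r = (r/λ₁ + 1/λ)⁻¹`, where `G ~ Gamma(α-1/2, λ)` and `N` is standard Gaussian, with
`X, G, N` mutually independent. -/
theorem gamma_input_gamma_output
    {Ω : Type*} [MeasureSpace Ω] [IsProbabilityMeasure (ℙ : Measure Ω)]
    (α lam lam₁ r : ℝ) (hα : 1 / 2 ≤ α) (hlam : 0 < lam) (hlam₁ : 0 < lam₁) (hr : 0 < r)
    (X G N : Ω → ℝ) (hXmeas : Measurable X) (hGmeas : Measurable G)
    (hNmeas : Measurable N)
    (hindep : iIndepFun ![X, G, N] ℙ)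
    (hX : Measure.map X ℙ = gammaMeasure α lam₁)
    (hG : Measure.map G ℙ = gammaMeasure (α - 1 / 2) lam)
    (hN : Measure.map N ℙ = gaussianReal 0 1)
    (Xr : Ω → ℝ)
    (hXr : Xr = fun ω => G ω + (Real.sqrt (r * X ω) + N ω / Real.sqrt (2 * lam)) ^ 2) :
    Measure.map Xr ℙ = gammaMeasure α (r / lam₁ + 1 / lam)⁻¹ := by
  subst hXr
  -- `gammaMeasure 0 lam` is the zero measure, so `hG` rules out `α = 1 / 2`
  replace hα : 1 / 2 < α := by
    refine hα.lt_of_ne fun h => ?_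
    have := Measure.isProbabilityMeasure_map (μ := (ℙ : Measure Ω)) hGmeas.aemeasurable
    rw [hG, ← h, sub_self, gammaMeasure_zero_left] at this
    exact IsProbabilityMeasure.ne_zero (0 : Measure ℝ) rfl
  have hmeas : ∀ i, Measurable (![X, G, N] i) := fun i => by fin_cases i <;> assumption
  have hXN : IndepFun X N ℙ := by simpa using hindep.indepFun (i := 0) (j := 2) (by decide)
  have hGQ : IndepFun G (fun ω => (√(r * X ω) + N ω / √(2 * lam)) ^ 2) ℙ :=
    ((hindep.indepFun_prodMk hmeas 0 2 1 (by decide) (by decide)).comp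
      (φ := fun p : ℝ × ℝ => (√(r * p.1) + p.2 / √(2 * lam)) ^ 2) (by fun_prop) measurable_id).symm
  have := isProbabilityMeasure_gammaMeasure (a := α) (r := (r / lam₁ + 1 / lam)⁻¹)
    (by linarith) (by positivity)
  have := Measure.isProbabilityMeasure_map (μ := (ℙ : Measure Ω)) (by fun_prop : Measurable
    fun ω => G ω + (√(r * X ω) + N ω / √(2 * lam)) ^ 2).aemeasurable
  refine Measure.ext_of_mgf_neg_nat_eq ?_ (ae_nonneg_gammaMeasure _ _) fun n => ?_
  · refine (ae_map_iff (by fun_prop) measurableSet_Ici).2 ?_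
    filter_upwards [ae_nonneg_of_map_eq_gammaMeasure hGmeas hG] with ω hω
    exact add_nonneg hω (sq_nonneg _)
  rw [mgf_id_map (by fun_prop), mgf_gamma_channel hα hlam hlam₁ hr.le (by simp) hXmeas hGmeas
    hNmeas hXN hGQ hX hG hN, mgf_id_gammaMeasure (by linarith) (by positivity)
    ((neg_nonpos.2 n.cast_nonneg).trans_lt (by positivity))]
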